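/- arXiv:2405.04428 — 5 statements merged into one kernel-verified Lean document; each statement's English description precedes it below -/
import Mathlib

section
/- Let G = (U,V,E) be a bipartite graph and let G^C be its clique-extended graph. A set of vertices C ⊆ U ∪ V is a maximal clique of G^C if and only if C is a maximal biclique of G. -/
/-!
Setup: a bipartite graph `G = (U, V, E)` is modeled by two disjoint finite sets of
vertices `U V : Finset α` and an edge set `E : Finset (α × α)` with every edge going
from `U` to `V` (edges are undirected; adjacency is symmetrized in `Nbhd`).
-/

variable {α : Type*} [Fintype α] [DecidableEq α]

/-- Neighborhood `N(x)` of a vertex in the bipartite graph with edge set `E`. -/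
def Nbhd (E : Finset (α × α)) (x : α) : Finset α :=
  Finset.univ.filter fun y => (x, y) ∈ E ∨ (y, x) ∈ E

/-- Second neighborhood `N₂(u)`: neighbors of neighbors of `u`, excluding `u` itself. -/
def secondNbhd (E : Finset (α × α)) (u : α) : Finset α :=
  Finset.univ.filter fun w => w ≠ u ∧ ∃ v ∈ Nbhd E u, w ∈ Nbhd E v

/-- Projection-extended neighborhood `N^P(u) = N(u) ∪ N₂(u)`. -/
def projNbhd (E : Finset (α × α)) (u : α) : Finset α :=
  Nbhd E u ∪ secondNbhd E u

/-- `C` is a biclique of the bipartite graph `(U, V, E)`: `C ⊆ U ∪ V` and every vertex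
of `C ∩ U` is adjacent to every vertex of `C ∩ V`. -/
def IsBiclique (U V : Finset α) (E : Finset (α × α)) (C : Finset α) : Prop :=
  C ⊆ U ∪ V ∧ ∀ u ∈ C ∩ U, ∀ v ∈ C ∩ V, (u, v) ∈ E

/-- `C` is a maximal biclique: it is a biclique not strictly contained in another biclique. -/
def IsMaxBiclique (U V : Finset α) (E : Finset (α × α)) (C : Finset α) : Prop :=
  IsBiclique U V E C ∧ ∀ D : Finset α, IsBiclique U V E D → C ⊆ D → D = C

/-- Adjacency in the clique-extended graph `G^C`: the edges of `E` together with all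
pairs of distinct vertices of `U` and all pairs of distinct vertices of `V`. -/
def AdjC (U V : Finset α) (E : Finset (α × α)) (x y : α) : Prop :=
  x ≠ y ∧ ((x, y) ∈ E ∨ (y, x) ∈ E ∨ (x ∈ U ∧ y ∈ U) ∨ (x ∈ V ∧ y ∈ V))

/-- `C` is a clique of the clique-extended graph `G^C`: pairwise adjacent vertices. -/
def IsCliqueC (U V : Finset α) (E : Finset (α × α)) (C : Finset α) : Prop :=
  ∀ x ∈ C, ∀ y ∈ C, x ≠ y → AdjC U V E x y

/-- `C` is a maximal clique of `G^C`: a clique not strictly contained in another clique. -/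
def IsMaxCliqueC (U V : Finset α) (E : Finset (α × α)) (C : Finset α) : Prop :=
  IsCliqueC U V E C ∧ ∀ D : Finset α, IsCliqueC U V E D → C ⊆ D → D = C

/-- Clique-extended neighborhood: `N^C(x) = N(x) ∪ (U \ {x})` if `x ∈ U`,
and `N^C(x) = N(x) ∪ (V \ {x})` if `x ∈ V`. -/
def NC (U V : Finset α) (E : Finset (α × α)) (x : α) : Finset α :=
  if x ∈ U then Nbhd E x ∪ (U \ {x}) else Nbhd E x ∪ (V \ {x})

/-- Bidegeneracy `b(u)` of a vertex `u ∈ U`: the maximum `b` such that there exists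
`U' ⊆ U` with `u ∈ U'` satisfying `|N^P(x) ∩ (U' ∪ V)| ≥ b` for all `x ∈ U'`. -/
noncomputable def bideg (U V : Finset α) (E : Finset (α × α)) (u : α) : ℕ :=
  sSup {b : ℕ | ∃ U' ⊆ U, u ∈ U' ∧ ∀ x ∈ U', b ≤ (projNbhd E x ∩ (U' ∪ V)).card}

/-- A nontrivial biclique: a biclique `C` with `C ∩ U ≠ ∅` and `C ∩ V ≠ ∅`. -/
def IsNontrivialBiclique (U V : Finset α) (E : Finset (α × α)) (C : Finset α) : Prop :=
  IsBiclique U V E C ∧ (C ∩ U).Nonempty ∧ (C ∩ V).Nonempty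

lemma cliqueC_iff_biclique {U V : Finset α} {E : Finset (α × α)}
    (hUV : Disjoint U V) (hcover : U ∪ V = Finset.univ)
    (hE : ∀ e ∈ E, e.1 ∈ U ∧ e.2 ∈ V) (C : Finset α) :
    IsCliqueC U V E C ↔ IsBiclique U V E C := by
  constructor
  · intro h
    refine ⟨by rw [hcover]; exact Finset.subset_univ C, ?_⟩
    intro u hu v hv
    simp only [Finset.mem_inter] at hu hv
    have hne : u ≠ v := fun heq => hUV.forall_ne_finset hu.2 hv.2 heq
    rcases (h u hu.1 v hv.1 hne).2 with h1 | h1 | h1 | h1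
    · exact h1
    · exact absurd (hE _ h1).1 (fun h2 => hUV.forall_ne_finset h2 hv.2 rfl)
    · exact absurd h1.2 (fun h2 => hUV.forall_ne_finset h2 hv.2 rfl)
    · exact absurd h1.1 (fun h2 => hUV.forall_ne_finset hu.2 h2 rfl)
  · intro ⟨_, h⟩ x hx y hy hne
    refine ⟨hne, ?_⟩
    have hx' : x ∈ U ∪ V := hcover ▸ Finset.mem_univ x
    have hy' : y ∈ U ∪ V := hcover ▸ Finset.mem_univ y
    rcases Finset.mem_union.1 hx' with hxU | hxV <;>
      rcases Finset.mem_union.1 hy' with hyU | hyV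
    · exact Or.inr (Or.inr (Or.inl ⟨hxU, hyU⟩))
    · exact Or.inl (h x (Finset.mem_inter.2 ⟨hx, hxU⟩) y (Finset.mem_inter.2 ⟨hy, hyV⟩))
    · exact Or.inr (Or.inl (h y (Finset.mem_inter.2 ⟨hy, hyU⟩) x (Finset.mem_inter.2 ⟨hx, hxV⟩)))
    · exact Or.inr (Or.inr (Or.inr ⟨hxV, hyV⟩))

/-- A set of vertices `C ⊆ U ∪ V` is a maximal clique of the
clique-extended graph `G^C` if and only if `C` is a maximal biclique of `G`.
(The vertex set of the graph is exactly `U ∪ V`.) -/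
theorem maxclique_of_extended_iff_maxbiclique
    (U V : Finset α) (E : Finset (α × α))
    (hUV : Disjoint U V) (hcover : U ∪ V = Finset.univ)
    (hE : ∀ e ∈ E, e.1 ∈ U ∧ e.2 ∈ V)
    (C : Finset α) (hC : C ⊆ U ∪ V) :
    IsMaxCliqueC U V E C ↔ IsMaxBiclique U V E C := by
  unfold IsMaxCliqueC IsMaxBiclique
  simp only [cliqueC_iff_biclique hUV hcover hE]
end

section
/- Let G = (U,V,E) be a bipartite graph, let u ∈ U, and let C be a biclique of G with u ∈ C and C_V ≠ ∅. Then the number of vertices of C is at most b(u) + 1, where b(u) is the bidegeneracy of u. In particular, a vertex cannot belong to a nontrivial biclique containing more vertices than its bidegeneracy plus one. -/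
/-!
Setup: a bipartite graph `G = (U, V, E)` is modeled by two disjoint finite sets of
vertices `U V : Finset α` and an edge set `E : Finset (α × α)` with every edge going
from `U` to `V` (edges are undirected; adjacency is symmetrized in `Nbhd`).
-/

variable {α : Type*} [Fintype α] [DecidableEq α]

/-- If `u ∈ U` and `C` is a biclique of `G` with `u ∈ C` and
`C ∩ V ≠ ∅`, then `|C| ≤ b(u) + 1`: a vertex cannot belong to a nontrivial biclique
containing more vertices than its bidegeneracy plus one. -/
theorem biclique_card_le_bideg_succ
    (U V : Finset α) (E : Finset (α × α))
    (hUV : Disjoint U V) (hE : ∀ e ∈ E, e.1 ∈ U ∧ e.2 ∈ V)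
    (u : α) (hu : u ∈ U) (C : Finset α)
    (hC : IsBiclique U V E C) (huC : u ∈ C) (hCV : (C ∩ V).Nonempty) :
    C.card ≤ bideg U V E u + 1 := by
  obtain ⟨hCsub, hadj⟩ := hC
  obtain ⟨v0, hv0⟩ := hCV
  have hmem : (C.card - 1) ∈
      {b : ℕ | ∃ U' ⊆ U, u ∈ U' ∧ ∀ x ∈ U', b ≤ (projNbhd E x ∩ (U' ∪ V)).card} := by
    refine ⟨C ∩ U, Finset.inter_subset_right, Finset.mem_inter.2 ⟨huC, hu⟩, ?_⟩
    intro x hx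
    have hkey : C \ {x} ⊆ projNbhd E x ∩ ((C ∩ U) ∪ V) := by
      intro w hw
      obtain ⟨hwC, hwx⟩ := Finset.mem_sdiff.1 hw
      have hwx' : w ≠ x := by simpa using hwx
      have hwUV := hCsub hwC
      rcases Finset.mem_union.1 hwUV with hwU | hwV
      · refine Finset.mem_inter.2 ⟨?_, Finset.mem_union_left _ (Finset.mem_inter.2 ⟨hwC, hwU⟩)⟩
        refine Finset.mem_union_right _ ?_
        simp only [secondNbhd, Finset.mem_filter, Finset.mem_univ, true_and]
        refine ⟨hwx', v0, ?_, ?_⟩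
        · simp only [Nbhd, Finset.mem_filter, Finset.mem_univ, true_and]
          exact Or.inl (hadj x hx v0 hv0)
        · simp only [Nbhd, Finset.mem_filter, Finset.mem_univ, true_and]
          exact Or.inr (hadj w (Finset.mem_inter.2 ⟨hwC, hwU⟩) v0 hv0)
      · refine Finset.mem_inter.2 ⟨?_, Finset.mem_union_right _ hwV⟩
        refine Finset.mem_union_left _ ?_
        simp only [Nbhd, Finset.mem_filter, Finset.mem_univ, true_and]
        exact Or.inl (hadj x hx w (Finset.mem_inter.2 ⟨hwC, hwV⟩))
    calc C.card - 1 = (C \ {x}).card := by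
          rw [Finset.sdiff_singleton_eq_erase, Finset.card_erase_of_mem (Finset.mem_of_mem_inter_left hx)]
      _ ≤ _ := Finset.card_le_card hkey
  have hbdd : BddAbove {b : ℕ | ∃ U' ⊆ U, u ∈ U' ∧
      ∀ x ∈ U', b ≤ (projNbhd E x ∩ (U' ∪ V)).card} := by
    refine ⟨Fintype.card α, fun b hb => ?_⟩
    obtain ⟨U', _, huU', h⟩ := hb
    exact (h u huU').trans (Finset.card_le_card (Finset.subset_univ _)) |>.trans
      (le_of_eq (Finset.card_univ))
  have h1 : C.card - 1 ≤ bideg U V E u := le_csSup hbdd hmem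
  have h2 : 1 ≤ C.card := Finset.card_pos.2 ⟨u, huC⟩
  omega
end

section
/- Let G = (U,V,E) be a bipartite graph, let R be a biclique of G, and let P = {x ∈ (U ∪ V) \ R : x ∈ N^C(y) for every y ∈ R} be the set of vertices outside R that are clique-extended neighbors of all vertices of R. If P ∩ U = ∅ or P ∩ V = ∅, then R ∪ P is a maximal biclique of G. -/
/-!
Setup: a bipartite graph `G = (U, V, E)` is modeled by two disjoint finite sets of
vertices `U V : Finset α` and an edge set `E : Finset (α × α)` with every edge going
from `U` to `V` (edges are undirected; adjacency is symmetrized in `Nbhd`).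
-/

variable {α : Type*} [Fintype α] [DecidableEq α]

/-- Let `R` be a biclique of `G` and let
`P = {x ∈ (U ∪ V) \ R : x ∈ N^C(y) for every y ∈ R}` be the vertices outside `R` that
are clique-extended neighbors of all vertices of `R`. If `P ∩ U = ∅` or `P ∩ V = ∅`,
then `R ∪ P` is a maximal biclique of `G`. -/
theorem maximality_test
    (U V : Finset α) (E : Finset (α × α))
    (hUV : Disjoint U V) (hE : ∀ e ∈ E, e.1 ∈ U ∧ e.2 ∈ V)
    (R : Finset α) (hR : IsBiclique U V E R)
    (P : Finset α)
    (hP : P = ((U ∪ V) \ R).filter fun x => ∀ y ∈ R, x ∈ NC U V E y)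
    (h : P ∩ U = ∅ ∨ P ∩ V = ∅) :
    IsMaxBiclique U V E (R ∪ P) := by

  have hdU : ∀ x, x ∈ U → x ∉ V := fun x hu hv => Finset.disjoint_left.mp hUV hu hv
  have hPm : ∀ x, x ∈ P ↔ ((x ∈ U ∨ x ∈ V) ∧ x ∉ R ∧ ∀ y ∈ R, x ∈ NC U V E y) := by
    intro x; subst hP
    simp only [Finset.mem_filter, Finset.mem_sdiff, Finset.mem_union, and_assoc]
  -- u ∈ P ∩ U is adjacent to every v ∈ R ∩ V
  have adjPU : ∀ u, u ∈ P → u ∈ U → ∀ v, v ∈ R → v ∈ V → (u, v) ∈ E := by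
    intro u hu huU v hvR hvV
    have := ((hPm u).mp hu).2.2 v hvR
    have hvU : v ∉ U := fun hv => hdU v hv hvV
    rw [NC, if_neg hvU, Finset.mem_union] at this
    rcases this with hn | hs
    · simp only [Nbhd, Finset.mem_filter] at hn
      rcases hn.2 with he | he
      · exact absurd (hE _ he).2 (hdU u huU)
      · exact he
    · exact absurd (Finset.mem_sdiff.mp hs).1 (hdU u huU)
  -- v ∈ P ∩ V is adjacent to every u ∈ R ∩ U
  have adjPV : ∀ v, v ∈ P → v ∈ V → ∀ u, u ∈ R → u ∈ U → (u, v) ∈ E := by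
    intro v hv hvV u huR huU
    have := ((hPm v).mp hv).2.2 u huR
    rw [NC, if_pos huU, Finset.mem_union] at this
    rcases this with hn | hs
    · simp only [Nbhd, Finset.mem_filter] at hn
      rcases hn.2 with he | he
      · exact he
      · exact absurd (hE _ he).1 (fun h' => hdU v h' hvV)
    · exact absurd (Finset.mem_sdiff.mp hs).1 (fun h' => hdU v h' hvV)
  have hbic : IsBiclique U V E (R ∪ P) := by
    constructor
    · intro x hx
      rcases Finset.mem_union.mp hx with hx | hx
      · exact hR.1 hx
      · rcases ((hPm x).mp hx).1 with h' | h'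
        · exact Finset.mem_union_left _ h'
        · exact Finset.mem_union_right _ h'
    · intro u hu v hv
      have huU := (Finset.mem_inter.mp hu).2
      have hvV := (Finset.mem_inter.mp hv).2
      rcases Finset.mem_union.mp (Finset.mem_inter.mp hu).1 with huR | huP
      · rcases Finset.mem_union.mp (Finset.mem_inter.mp hv).1 with hvR | hvP
        · exact hR.2 u (Finset.mem_inter.mpr ⟨huR, huU⟩) v (Finset.mem_inter.mpr ⟨hvR, hvV⟩)
        · exact adjPV v hvP hvV u huR huU
      · rcases Finset.mem_union.mp (Finset.mem_inter.mp hv).1 with hvR | hvP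
        · exact adjPU u huP huU v hvR hvV
        · rcases h with h | h
          · exact absurd (Finset.mem_inter.mpr ⟨huP, huU⟩) (by simp [h])
          · exact absurd (Finset.mem_inter.mpr ⟨hvP, hvV⟩) (by simp [h])
  refine ⟨hbic, fun D hD hsub => ?_⟩
  refine Finset.Subset.antisymm (fun z hz => ?_) hsub
  by_contra hzn
  have hzR : z ∉ R := fun h' => hzn (Finset.mem_union_left _ h')
  have hzP : z ∉ P := fun h' => hzn (Finset.mem_union_right _ h')
  apply hzP
  rw [hPm]
  have hzUV := hD.1 hz
  refine ⟨Finset.mem_union.mp hzUV, hzR, fun y hy => ?_⟩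
  have hyD : y ∈ D := hsub (Finset.mem_union_left _ hy)
  have hzy : z ≠ y := fun h' => hzR (h' ▸ hy)
  rcases Finset.mem_union.mp hzUV with hzU | hzV
  · rcases Finset.mem_union.mp (hR.1 hy) with hyU | hyV
    · rw [NC, if_pos hyU]
      exact Finset.mem_union_right _ (Finset.mem_sdiff.mpr ⟨hzU, by simp [hzy]⟩)
    · have hyU : y ∉ U := fun h' => hdU y h' hyV
      rw [NC, if_neg hyU]
      have he : (z, y) ∈ E := hD.2 z (Finset.mem_inter.mpr ⟨hz, hzU⟩) y (Finset.mem_inter.mpr ⟨hyD, hyV⟩)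
      exact Finset.mem_union_left _ (by simp [Nbhd, he])
  · rcases Finset.mem_union.mp (hR.1 hy) with hyU | hyV
    · rw [NC, if_pos hyU]
      have he : (y, z) ∈ E := hD.2 y (Finset.mem_inter.mpr ⟨hyD, hyU⟩) z (Finset.mem_inter.mpr ⟨hz, hzV⟩)
      exact Finset.mem_union_left _ (by simp [Nbhd, he])
    · have hyU : y ∉ U := fun h' => hdU y h' hyV
      rw [NC, if_neg hyU]
      exact Finset.mem_union_right _ (Finset.mem_sdiff.mpr ⟨hzV, by simp [hzy]⟩)
end

section
/- Let G = (U,V,E) be a bipartite graph, let R be a biclique of G, and let S ⊆ V \ R be a nonempty set of vertices each of which is a clique-extended neighbor of every vertex of R. Then no biclique C with R ⊆ C, C \ R ⊆ V and C ∩ S = ∅ is a maximal biclique of G. (Symmetrically with the roles of U and V exchanged.) Hence, in the Bron–Kerbosch recursion, a call with P_U = ∅ and X_V ≠ ∅ can output no maximal biclique. -/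
/-!
Setup: a bipartite graph `G = (U, V, E)` is modeled by two disjoint finite sets of
vertices `U V : Finset α` and an edge set `E : Finset (α × α)` with every edge going
from `U` to `V` (edges are undirected; adjacency is symmetrized in `Nbhd`).
-/

variable {α : Type*} [Fintype α] [DecidableEq α]

/-- Let `R` be a biclique of `G` and let `S ⊆ V \ R` be a nonempty
set of vertices each of which is a clique-extended neighbor of every vertex of `R`.
Then no biclique `C` with `R ⊆ C`, `C \ R ⊆ V` and `C ∩ S = ∅` is a maximal biclique
of `G`; symmetrically with the roles of `U` and `V` exchanged. -/
theorem no_maximal_biclique_avoiding_common_neighbors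
    (U V : Finset α) (E : Finset (α × α))
    (hUV : Disjoint U V) (hE : ∀ e ∈ E, e.1 ∈ U ∧ e.2 ∈ V)
    (R : Finset α) (hR : IsBiclique U V E R) :
    (∀ S : Finset α, S ⊆ V \ R → S.Nonempty → (∀ s ∈ S, ∀ y ∈ R, s ∈ NC U V E y) →
      ∀ C : Finset α, IsBiclique U V E C → R ⊆ C → C \ R ⊆ V → C ∩ S = ∅ →
        ¬ IsMaxBiclique U V E C) ∧
    (∀ S : Finset α, S ⊆ U \ R → S.Nonempty → (∀ s ∈ S, ∀ y ∈ R, s ∈ NC U V E y) →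
      ∀ C : Finset α, IsBiclique U V E C → R ⊆ C → C \ R ⊆ U → C ∩ S = ∅ →
        ¬ IsMaxBiclique U V E C) := by
  constructor
  · intro S hSV hSne hNC C hC hRC hCRV hCS ⟨_, hmax⟩
    obtain ⟨s, hs⟩ := hSne
    have hsVR := hSV hs
    have hsV : s ∈ V := (Finset.mem_sdiff.mp hsVR).1
    have hsU : s ∉ U := fun h => (Finset.disjoint_left.mp hUV h) hsV
    have hCU : ∀ u ∈ C ∩ U, u ∈ R := by
      intro u hu
      rw [Finset.mem_inter] at hu
      by_contra hnot
      exact (Finset.disjoint_left.mp hUV hu.2) (hCRV (Finset.mem_sdiff.mpr ⟨hu.1, hnot⟩))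
    have hedge : ∀ u ∈ C ∩ U, (u, s) ∈ E := by
      intro u hu
      have huU : u ∈ U := (Finset.mem_inter.mp hu).2
      have h := hNC s hs u (hCU u hu)
      rw [NC, if_pos huU, Finset.mem_union] at h
      rcases h with h | h
      · rw [Nbhd, Finset.mem_filter] at h
        rcases h.2 with h | h
        · exact h
        · exact absurd (hE _ h).1 hsU
      · exact absurd (Finset.mem_sdiff.mp h).1 hsU
    have hD : IsBiclique U V E (insert s C) := by
      constructor
      · intro x hx
        rcases Finset.mem_insert.mp hx with rfl | hx
        · exact Finset.mem_union_right _ hsV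
        · exact hC.1 hx
      · intro u hu v hv
        rw [Finset.mem_inter, Finset.mem_insert] at hu hv
        rcases hu.1 with rfl | huC
        · exact absurd hu.2 hsU
        rcases hv.1 with rfl | hvC
        · exact hedge u (Finset.mem_inter.mpr ⟨huC, hu.2⟩)
        · exact hC.2 u (Finset.mem_inter.mpr ⟨huC, hu.2⟩) v (Finset.mem_inter.mpr ⟨hvC, hv.2⟩)
    have := hmax _ hD (Finset.subset_insert _ _)
    have hsC : s ∈ C := this ▸ Finset.mem_insert_self s C
    have : s ∈ C ∩ S := Finset.mem_inter.mpr ⟨hsC, hs⟩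
    rw [hCS] at this
    exact absurd this (Finset.notMem_empty s)
  · intro S hSU hSne hNC C hC hRC hCRU hCS ⟨_, hmax⟩
    obtain ⟨s, hs⟩ := hSne
    have hsUR := hSU hs
    have hsU : s ∈ U := (Finset.mem_sdiff.mp hsUR).1
    have hsV : s ∉ V := fun h => (Finset.disjoint_left.mp hUV hsU) h
    have hCV : ∀ v ∈ C ∩ V, v ∈ R := by
      intro v hv
      rw [Finset.mem_inter] at hv
      by_contra hnot
      exact (Finset.disjoint_left.mp hUV (hCRU (Finset.mem_sdiff.mpr ⟨hv.1, hnot⟩))) hv.2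
    have hedge : ∀ v ∈ C ∩ V, (s, v) ∈ E := by
      intro v hv
      have hvV : v ∈ V := (Finset.mem_inter.mp hv).2
      have hvU : v ∉ U := fun h => (Finset.disjoint_left.mp hUV h) hvV
      have h := hNC s hs v (hCV v hv)
      rw [NC, if_neg hvU, Finset.mem_union] at h
      rcases h with h | h
      · rw [Nbhd, Finset.mem_filter] at h
        rcases h.2 with h | h
        · exact absurd (hE _ h).1 hvU
        · exact h
      · exact absurd (Finset.mem_sdiff.mp h).1 hsV
    have hD : IsBiclique U V E (insert s C) := by
      constructor
      · intro x hx
        rcases Finset.mem_insert.mp hx with rfl | hx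
        · exact Finset.mem_union_left _ hsU
        · exact hC.1 hx
      · intro u hu v hv
        rw [Finset.mem_inter, Finset.mem_insert] at hu hv
        rcases hv.1 with rfl | hvC
        · exact absurd hv.2 hsV
        rcases hu.1 with rfl | huC
        · exact hedge v (Finset.mem_inter.mpr ⟨hvC, hv.2⟩)
        · exact hC.2 u (Finset.mem_inter.mpr ⟨huC, hu.2⟩) v (Finset.mem_inter.mpr ⟨hvC, hv.2⟩)
    have := hmax _ hD (Finset.subset_insert _ _)
    have hsC : s ∈ C := this ▸ Finset.mem_insert_self s C
    have : s ∈ C ∩ S := Finset.mem_inter.mpr ⟨hsC, hs⟩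
    rw [hCS] at this
    exact absurd this (Finset.notMem_empty s)
end

section
/- Let G = (U,V,E) be a bipartite graph with clique-extended graph G^C, let R be a clique of G^C, let P and X be disjoint sets of vertices whose union is exactly the set of common clique-extended neighbors of all vertices of R that lie outside R, and let p ∈ P ∪ X (the pivot). Then every maximal clique C of G^C satisfying R ⊆ C, C \ R ⊆ P and C ∩ X = ∅ contains at least one vertex of P \ N^C(p); in particular, by the pruning identities, if p ∈ U then C contains a vertex of ({p} ∩ P) ∪ ((P ∩ V) \ N(p)). -/
/-!
Setup: a bipartite graph `G = (U, V, E)` is modeled by two disjoint finite sets of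
vertices `U V : Finset α` and an edge set `E : Finset (α × α)` with every edge going
from `U` to `V` (edges are undirected; adjacency is symmetrized in `Nbhd`).
-/

variable {α : Type*} [Fintype α] [DecidableEq α]

/-- Let `R` be a clique of the clique-extended graph `G^C`, let `P`
and `X` be disjoint sets whose union is exactly the set of common clique-extended
neighbors of all vertices of `R` lying outside `R`, and let `p ∈ P ∪ X` be the pivot.
Then every maximal clique `C` of `G^C` with `R ⊆ C`, `C \ R ⊆ P` and `C ∩ X = ∅`
contains a vertex of `P \ N^C(p)`; in particular, if `p ∈ U` then `C` contains a
vertex of `({p} ∩ P) ∪ ((P ∩ V) \ N(p))`. -/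
theorem pivot_pruning_property
    (U V : Finset α) (E : Finset (α × α))
    (hUV : Disjoint U V) (hE : ∀ e ∈ E, e.1 ∈ U ∧ e.2 ∈ V)
    (R : Finset α) (hRsub : R ⊆ U ∪ V) (hR : IsCliqueC U V E R)
    (P X : Finset α) (hPX : Disjoint P X)
    (hunion : P ∪ X = ((U ∪ V) \ R).filter fun x => ∀ y ∈ R, x ∈ NC U V E y)
    (p : α) (hp : p ∈ P ∪ X) :
    ∀ C : Finset α, IsMaxCliqueC U V E C → R ⊆ C → C \ R ⊆ P → C ∩ X = ∅ →
      (∃ x ∈ C, x ∈ P \ NC U V E p) ∧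
      (p ∈ U → ∃ x ∈ C, x ∈ ({p} ∩ P) ∪ ((P ∩ V) \ Nbhd E p)) := by

  intro C hC hRC hCRP _hCX
  have hp' := hp
  rw [hunion, Finset.mem_filter, Finset.mem_sdiff] at hp'
  obtain ⟨⟨hpUV, hpR⟩, hpN⟩ := hp'
  have noSelf : ∀ x : α, x ∉ Nbhd E x := by
    intro x hx
    simp only [Nbhd, Finset.mem_filter, Finset.mem_univ, true_and] at hx
    rcases hx with h | h <;>
      exact Finset.disjoint_left.mp hUV (hE _ h).1 (hE _ h).2
  have edge_ne : ∀ a b : α, (a, b) ∈ E → a ≠ b := by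
    intro a b h hab
    exact Finset.disjoint_left.mp hUV (hab ▸ (hE _ h).1) (hE _ h).2
  have adjNC : ∀ x y : α, y ∈ U ∪ V → x ∈ NC U V E y → AdjC U V E x y := by
    intro x y hyUV hx
    unfold NC at hx
    have hne : x ≠ y := by
      rintro rfl
      split at hx <;> simp_all [noSelf x]
    split at hx
    · rcases Finset.mem_union.mp hx with h | h
      · simp only [Nbhd, Finset.mem_filter, Finset.mem_univ, true_and] at h
        exact ⟨hne, by tauto⟩
      · rw [Finset.mem_sdiff] at h
        exact ⟨hne, Or.inr (Or.inr (Or.inl ⟨h.1, by assumption⟩))⟩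
    · have hyV : y ∈ V := by
        rcases Finset.mem_union.mp hyUV with h | h
        · exact absurd h (by assumption)
        · exact h
      rcases Finset.mem_union.mp hx with h | h
      · simp only [Nbhd, Finset.mem_filter, Finset.mem_univ, true_and] at h
        exact ⟨hne, by tauto⟩
      · rw [Finset.mem_sdiff] at h
        exact ⟨hne, Or.inr (Or.inr (Or.inr ⟨h.1, hyV⟩))⟩
  have adj_symm : ∀ x y : α, AdjC U V E x y → AdjC U V E y x := by
    intro x y ⟨h1, h2⟩
    exact ⟨h1.symm, by tauto⟩
  have hpNCp : p ∉ NC U V E p := by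
    unfold NC
    split <;> simp [noSelf p]
  have hPsub : P ⊆ (U ∪ V) \ R := by
    intro x hx
    have : x ∈ P ∪ X := Finset.mem_union_left _ hx
    rw [hunion, Finset.mem_filter] at this
    exact this.1
  have key : ∃ x ∈ C, x ∈ P \ NC U V E p := by
    by_contra h
    push_neg at h
    have hpC : p ∉ C := by
      intro hpc
      have hpP : p ∈ P := hCRP (Finset.mem_sdiff.mpr ⟨hpc, hpR⟩)
      have := h p hpc
      rw [Finset.mem_sdiff] at this
      push_neg at this
      exact hpNCp (this hpP)
    have hadj : ∀ y ∈ C, AdjC U V E p y := by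
      intro y hy
      by_cases hyR : y ∈ R
      · exact adjNC p y (hRsub hyR) (hpN y hyR)
      · have hyP : y ∈ P := hCRP (Finset.mem_sdiff.mpr ⟨hy, hyR⟩)
        have := h y hy
        rw [Finset.mem_sdiff] at this
        push_neg at this
        exact adj_symm y p (adjNC y p hpUV (this hyP))
    have hD : IsCliqueC U V E (insert p C) := by
      intro a ha b hb hab
      rcases Finset.mem_insert.mp ha with rfl | ha' <;>
        rcases Finset.mem_insert.mp hb with rfl | hb'
      · exact absurd rfl hab
      · exact hadj b hb'
      · exact adj_symm _ _ (hadj a ha')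
      · exact hC.1 a ha' b hb' hab
    have := hC.2 _ hD (Finset.subset_insert p C)
    exact hpC (this ▸ Finset.mem_insert_self p C)
  refine ⟨key, fun hpU => ?_⟩
  obtain ⟨x, hxC, hx⟩ := key
  rw [Finset.mem_sdiff] at hx
  obtain ⟨hxP, hxNC⟩ := hx
  by_cases hxp : x = p
  · exact ⟨x, hxC, Finset.mem_union_left _ (by subst hxp; simp [hxP])⟩
  · refine ⟨x, hxC, Finset.mem_union_right _ ?_⟩
    unfold NC at hxNC
    rw [if_pos hpU] at hxNC
    simp only [Finset.mem_union, Finset.mem_sdiff, Finset.mem_singleton, not_or, not_and,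
      not_not] at hxNC
    have hxU : x ∉ U := fun hxU => hxp (hxNC.2 hxU)
    have hxV : x ∈ V := by
      rcases Finset.mem_union.mp (Finset.mem_sdiff.mp (hPsub hxP)).1 with h | h
      · exact absurd h hxU
      · exact h
    exact Finset.mem_sdiff.mpr ⟨Finset.mem_inter.mpr ⟨hxP, hxV⟩, hxNC.1⟩
end
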